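/- arXiv:2502.07041 — 3 statements merged into one kernel-verified Lean document; each statement's English description precedes it below -/
import Mathlib

section
/- Let 1 < p < 2 and q > p. For every constant C > 0 there exist n ∈ ℕ and functions f_1, …, f_n ∈ X_p such that (Σ_{i=1}^n ‖f_i‖_{L^q[0,1]}^p)^{1/p} > C · max_{ε ∈ {-1,1}^n} ‖Σ_{i=1}^n ε_i f_i‖_{X_p}. (That is, the inclusion X_p ⊂ L^q is not (p,1)-absolutely summing when q > p; witnesses are given by f_i = χ_{[(i-1)/k, i/k)}.) -/
open MeasureTheory
open scoped ENNReal

/-- Lebesgue measure restricted to `[0,1]`. -/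
noncomputable def mu01 : Measure ℝ := volume.restrict (Set.Icc 0 1)

/-- The weight `W_p(t) = (log(e/t))^{1-p}` for `t ∈ (0,1]`, `W_p(0)=0`. -/
noncomputable def Wp (p t : ℝ) : ℝ :=
  if t = 0 then 0 else Real.log (Real.exp 1 / t) ^ (1 - p)

/-- The norm of the Lorentz space `X_p` on `[0,1]`:
`‖f‖_{X_p} = (∫_0^∞ W_p(μ{s ∈ [0,1] : |f s|^p > λ}) dλ)^{1/p}`. -/
noncomputable def XpNorm (p : ℝ) (f : ℝ → ℝ) : ℝ≥0∞ :=
  (∫⁻ lam in Set.Ioi (0 : ℝ),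
      ENNReal.ofReal
        (Wp p (volume {s : ℝ | s ∈ Set.Icc (0 : ℝ) 1 ∧ lam < |f s| ^ p}).toReal)) ^ (1 / p)

/-- Luxemburg norm of the exponential Orlicz space `Exp L^α` on `[0,1]`. -/
noncomputable def expLNorm (α : ℝ) (f : ℝ → ℝ) : ℝ≥0∞ :=
  ⨅ (lam : ℝ) (_ : 0 < lam ∧
      ∫⁻ t, ENNReal.ofReal (Real.exp ((|f t| / lam) ^ α) - 1) ∂mu01 ≤ 1),
    ENNReal.ofReal lam

/-- Weak `ℓ^q` quasinorm of a finite family of reals. -/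
noncomputable def weakLq (q : ℝ) {n : ℕ} (a : Fin n → ℝ) : ℝ :=
  ⨆ t : Set.Ioi (0 : ℝ), t.1 * (Nat.card {k : Fin n // t.1 < |a k|} : ℝ) ^ (1 / q)

/-- Weak `ℓ^q` quasinorm of a sequence with values in `[0,∞]`, cardinalities
taken via the counting measure on `ℕ`. -/
noncomputable def weakLqSeq (q : ℝ) (a : ℕ → ℝ≥0∞) : ℝ≥0∞ :=
  ⨆ t : Set.Ioi (0 : ℝ),
    ENNReal.ofReal t.1 * Measure.count {k : ℕ | ENNReal.ofReal t.1 < a k} ^ (1 / q)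

/-- Peetre `K`-functional for the couple `(L^1[0,1], L^∞[0,1])`. -/
noncomputable def Kfun (τ : ℝ) (f : ℝ → ℝ) : ℝ≥0∞ :=
  ⨅ (g : ℝ → ℝ) (h : ℝ → ℝ) (_ : f = g + h),
    eLpNorm g 1 mu01 + ENNReal.ofReal τ * eLpNorm h ⊤ mu01

/-- The Rademacher functions `r_k(t) = sgn(sin(2^k π t))`. -/
noncomputable def rademacher (k : ℕ) (t : ℝ) : ℝ :=
  Real.sign (Real.sin (2 ^ k * Real.pi * t))

/-- Marcinkiewicz space norm `‖f‖_{M_φ} = sup_{0<t≤1} (φ(t)/t) K(t,f;L^1,L^∞)`. -/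
noncomputable def MNorm (φ : ℝ → ℝ) (f : ℝ → ℝ) : ℝ≥0∞ :=
  ⨆ t : {t : ℝ // 0 < t ∧ t ≤ 1}, ENNReal.ofReal (φ t.1 / t.1) * Kfun t.1 f

/-! The indicators of the `k` intervals `[i/k, (i+1)/k)` witness the failure: every signed sum of
them has modulus `1` on `[0,1)`, hence `X_p`-norm `W_p(1)^{1/p} = 1`, while each has `L^q`-norm
`k^{-1/q}`, so that `(∑ ‖f_i‖_q^p)^{1/p} = k^{(1-p/q)/p} → ∞` because `q > p`. -/

open Set Function

section XpNormOfIndicator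

variable {p : ℝ}

lemma Wp_zero : Wp p 0 = 0 := if_pos rfl

lemma Wp_one : Wp p 1 = 1 := by
  simp [Wp]

lemma abs_rpow_eq_indicator_of_abs_eq_indicator (hp : 0 < p) {f : ℝ → ℝ} {A : Set ℝ}
    (hf : ∀ s, |f s| = A.indicator 1 s) (s : ℝ) : |f s| ^ p = A.indicator 1 s := by
  by_cases hs : s ∈ A <;> simp [hf, hs, Real.zero_rpow hp.ne']

/-- The distribution function of `|f|^p` is `μ(A ∩ [0,1])` on `(0,1)` and vanishes on `[1,∞)`,
so the layer-cake integral defining the norm collapses to a single value of `W_p`. -/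
lemma XpNorm_eq_of_abs_eq_indicator (hp : 0 < p) {f : ℝ → ℝ} {A : Set ℝ}
    (hf : ∀ s, |f s| = A.indicator 1 s) :
    XpNorm p f = ENNReal.ofReal (Wp p (volume (Icc 0 1 ∩ A)).toReal) ^ (1 / p) := by
  set c := ENNReal.ofReal (Wp p (volume (Icc 0 1 ∩ A)).toReal)
  have hlevel : ∀ lam ∈ Ioi (0 : ℝ),
      ENNReal.ofReal (Wp p (volume {s : ℝ | s ∈ Icc (0 : ℝ) 1 ∧ lam < |f s| ^ p}).toReal)
        = (Iio 1).indicator (fun _ => c) lam := by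
    intro lam hlam
    simp only [abs_rpow_eq_indicator_of_abs_eq_indicator hp hf]
    by_cases hlam1 : lam < 1
    · have hset : {s : ℝ | s ∈ Icc (0 : ℝ) 1 ∧ lam < A.indicator 1 s} = Icc 0 1 ∩ A := by
        ext s
        by_cases hs : s ∈ A <;> simp [hs, hlam1, (mem_Ioi.1 hlam).not_gt]
      rw [hset, indicator_of_mem (mem_Iio.2 hlam1)]
    · have hset : {s : ℝ | s ∈ Icc (0 : ℝ) 1 ∧ lam < A.indicator 1 s} = ∅ := by
        ext s
        by_cases hs : s ∈ A <;> simp [hs, (not_lt.1 hlam1).not_gt, (mem_Ioi.1 hlam).le.not_gt]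
      rw [hset, indicator_of_notMem (by simpa using hlam1)]
      simp [Wp_zero]
  unfold XpNorm
  rw [setLIntegral_congr_fun measurableSet_Ioi hlevel, lintegral_indicator measurableSet_Iio,
    setLIntegral_const, Measure.restrict_apply measurableSet_Iio, Iio_inter_Ioi, Real.volume_Ioo]
  simp

lemma XpNorm_ne_top_of_abs_eq_indicator (hp : 0 < p) {f : ℝ → ℝ} {A : Set ℝ}
    (hf : ∀ s, |f s| = A.indicator 1 s) : XpNorm p f ≠ ⊤ := by
  rw [XpNorm_eq_of_abs_eq_indicator hp hf]
  exact ENNReal.rpow_ne_top_of_nonneg (by positivity) ENNReal.ofReal_ne_top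

end XpNormOfIndicator

lemma abs_sum_mul_indicator_of_pairwise_disjoint {α ι : Type*} [Fintype ι] {I : ι → Set α}
    (hI : Pairwise (Disjoint on I)) {ε : ι → ℝ} (hε : ∀ i, |ε i| = 1) (s : α) :
    |∑ i, ε i * (I i).indicator 1 s| = (⋃ i, I i).indicator 1 s := by
  by_cases hs : s ∈ ⋃ i, I i
  · obtain ⟨j, hj⟩ := mem_iUnion.1 hs
    rw [Finset.sum_eq_single j, indicator_of_mem hj, indicator_of_mem hs]
    · simp [hε]
    · intro i _ hij
      rw [indicator_of_notMem fun hi => disjoint_left.1 (hI hij) hi hj, mul_zero]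
    · simp
  · simp only [mem_iUnion, not_exists] at hs
    simp [hs]

def partitionInterval (k i : ℕ) : Set ℝ := Ico (i / k) ((i + 1) / k)

section partitionInterval

variable {k : ℕ}

lemma measurableSet_partitionInterval (i : ℕ) : MeasurableSet (partitionInterval k i) :=
  measurableSet_Ico

lemma mem_partitionInterval_iff (hk : 0 < k) {i : ℕ} {s : ℝ} :
    s ∈ partitionInterval k i ↔ 0 ≤ s ∧ ⌊s * k⌋₊ = i := by
  have hk' : (0 : ℝ) < k := Nat.cast_pos.2 hk
  simp only [partitionInterval, mem_Ico, div_le_iff₀ hk', lt_div_iff₀ hk']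
  constructor
  · rintro ⟨hi, hi1⟩
    have hs : 0 ≤ s * k := le_trans (Nat.cast_nonneg i) hi
    exact ⟨nonneg_of_mul_nonneg_left hs hk', (Nat.floor_eq_iff hs).2 ⟨hi, hi1⟩⟩
  · rintro ⟨hs, rfl⟩
    exact (Nat.floor_eq_iff (by positivity)).1 rfl

lemma pairwise_disjoint_partitionInterval (hk : 0 < k) :
    Pairwise (Disjoint on fun i : Fin k => partitionInterval k i) := by
  intro i j hij
  refine disjoint_left.2 fun s hi hj => hij (Fin.ext ?_)
  rw [mem_partitionInterval_iff hk] at hi hj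
  exact hi.2.symm.trans hj.2

lemma iUnion_partitionInterval (hk : 0 < k) :
    ⋃ i : Fin k, partitionInterval k i = Ico 0 1 := by
  ext s
  simp only [mem_iUnion, mem_partitionInterval_iff hk, mem_Ico]
  constructor
  · rintro ⟨i, hs, hi⟩
    refine ⟨hs, ?_⟩
    have := (Nat.floor_lt (by positivity)).1 (hi ▸ i.2)
    rwa [mul_lt_iff_lt_one_left (by exact_mod_cast hk)] at this
  · rintro ⟨hs, hs1⟩
    have hlt : ⌊s * k⌋₊ < k :=
      (Nat.floor_lt (by positivity)).2 (mul_lt_of_lt_one_left (by exact_mod_cast hk) hs1)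
    exact ⟨⟨_, hlt⟩, hs, rfl⟩

lemma mu01_partitionInterval (hk : 0 < k) (i : Fin k) :
    mu01 (partitionInterval k i) = (k : ℝ≥0∞)⁻¹ := by
  have hsub : partitionInterval k i ⊆ Icc 0 1 :=
    (subset_iUnion (fun j : Fin k => partitionInterval k j) i).trans
      ((iUnion_partitionInterval hk).trans_subset Ico_subset_Icc_self)
  rw [mu01, Measure.restrict_apply (measurableSet_partitionInterval i),
    inter_eq_self_of_subset_left hsub, partitionInterval, Real.volume_Ico, ← sub_div,
    add_sub_cancel_left, one_div, ENNReal.ofReal_inv_of_pos (by exact_mod_cast hk), ENNReal.ofReal_natCast]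

lemma eLpNorm_indicator_partitionInterval (hk : 0 < k) {q : ℝ} (hq : 0 < q) (i : Fin k) :
    eLpNorm ((partitionInterval k i).indicator (1 : ℝ → ℝ)) (ENNReal.ofReal q) mu01
      = (k : ℝ≥0∞)⁻¹ ^ (1 / q) := by
  rw [show (partitionInterval k i).indicator (1 : ℝ → ℝ)
      = (partitionInterval k i).indicator fun _ => (1 : ℝ) from rfl,
    eLpNorm_indicator_const (measurableSet_partitionInterval i) (by simpa using hq)
      ENNReal.ofReal_ne_top,
    mu01_partitionInterval hk, ENNReal.toReal_ofReal hq.le]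
  simp

lemma XpNorm_sum_mul_indicator_partitionInterval {p : ℝ} (hp : 0 < p) (hk : 0 < k)
    {ε : Fin k → ℝ} (hε : ∀ i, |ε i| = 1) :
    XpNorm p (fun s => ∑ i, ε i * (partitionInterval k i).indicator 1 s) = 1 := by
  have hf := abs_sum_mul_indicator_of_pairwise_disjoint (pairwise_disjoint_partitionInterval hk) hε
  rw [XpNorm_eq_of_abs_eq_indicator hp hf, iUnion_partitionInterval hk,
    inter_eq_self_of_subset_right Ico_subset_Icc_self, Real.volume_Ico]
  simp [Wp_one]

end partitionInterval

lemma rpow_sum_const_inv_rpow {k : ℕ} (hk : k ≠ 0) (p q : ℝ) :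
    (∑ _i : Fin k, ((k : ℝ≥0∞)⁻¹ ^ (1 / q)) ^ p) ^ (1 / p)
      = (k : ℝ≥0∞) ^ ((1 - p / q) / p) := by
  have hsub : (k : ℝ≥0∞) * ((k : ℝ≥0∞) ^ (p / q))⁻¹ = (k : ℝ≥0∞) ^ (1 - p / q) := by
    rw [← div_eq_mul_inv, ENNReal.rpow_sub _ _ (by exact_mod_cast hk) (ENNReal.natCast_ne_top k),
      ENNReal.rpow_one]
  rw [Finset.sum_const, Finset.card_univ, Fintype.card_fin, nsmul_eq_mul, ← ENNReal.rpow_mul,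
    ENNReal.inv_rpow, one_div_mul_eq_div, hsub, ← ENNReal.rpow_mul, mul_one_div]

theorem Xp_subset_Lq_not_p_one_summing_general (p q : ℝ) (hp : 1 < p) (hq : p < q)
    (C : ℝ) :
    ∃ (n : ℕ) (f : Fin n → ℝ → ℝ), (∀ i, Measurable (f i)) ∧ (∀ i, XpNorm p (f i) ≠ ⊤) ∧
      ENNReal.ofReal C *
          (⨆ ε : Fin n → ({-1, 1} : Set ℝ), XpNorm p (fun s => ∑ i, (ε i : ℝ) * f i s)) <
        (∑ i, eLpNorm (f i) (ENNReal.ofReal q) mu01 ^ p) ^ (1 / p) := by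
  have hp0 : 0 < p := by linarith
  have hq0 : 0 < q := by linarith
  have hα : 0 < (1 - p / q) / p := div_pos (by rw [sub_pos, div_lt_one hq0]; exact hq) hp0
  obtain ⟨k, hCk, hk⟩ : ∃ k : ℕ, C < (k : ℝ) ^ ((1 - p / q) / p) ∧ 0 < k :=
    (((tendsto_rpow_atTop hα).comp tendsto_natCast_atTop_atTop).eventually_gt_atTop C
      |>.and (Filter.eventually_gt_atTop 0)).exists
  have hsign : ∀ ε : Fin k → ({-1, 1} : Set ℝ), ∀ i, |(ε i : ℝ)| = 1 := by
    intro ε i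
    rcases (ε i).2 with h | h <;> rw [h] <;> norm_num
  have : Nonempty ({-1, 1} : Set ℝ) := ⟨⟨1, by simp⟩⟩
  refine ⟨k, fun i => (partitionInterval k i).indicator 1,
    fun i => measurable_one.indicator (measurableSet_partitionInterval i),
    fun i => XpNorm_ne_top_of_abs_eq_indicator hp0 fun s =>
      abs_of_nonneg (indicator_nonneg (fun _ _ => zero_le_one) s), ?_⟩
  simp only [XpNorm_sum_mul_indicator_partitionInterval hp0 hk (hsign _), ciSup_const, mul_one,
    eLpNorm_indicator_partitionInterval hk hq0, rpow_sum_const_inv_rpow hk.ne']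
  rwa [← ENNReal.ofReal_natCast, ENNReal.ofReal_rpow_of_pos (by exact_mod_cast hk),
    ENNReal.ofReal_lt_ofReal_iff (by positivity)]

/-- Example: for `1 < p < 2` and `q > p`, the inclusion `X_p ⊂ L^q` is not
`(p,1)`-absolutely summing. -/
theorem Xp_subset_Lq_not_p_one_summing (p q : ℝ) (hp : 1 < p) (hp2 : p < 2) (hq : p < q)
    (C : ℝ) (hC : 0 < C) :
    ∃ (n : ℕ) (f : Fin n → ℝ → ℝ), (∀ i, Measurable (f i)) ∧ (∀ i, XpNorm p (f i) ≠ ⊤) ∧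
      ENNReal.ofReal C *
          (⨆ ε : Fin n → ({-1, 1} : Set ℝ), XpNorm p (fun s => ∑ i, (ε i : ℝ) * f i s)) <
        (∑ i, eLpNorm (f i) (ENNReal.ofReal q) mu01 ^ p) ^ (1 / p) :=
  Xp_subset_Lq_not_p_one_summing_general p q hp hq C
end

section
/- Let 1 ≤ p < q < ∞. There exists a constant C > 0 such that for every n ∈ ℕ and every finite family f_1, …, f_n ∈ L^p[0,1], sup_{t>0} t · (#{k : ‖f_k‖_{L^p[0,1]} > t})^{1/q} ≤ C · ‖ x ↦ sup_{t>0} t · (#{k : |f_k(x)| > t})^{1/q} ‖_{L^p[0,1]}. (That is, L^p is ℓ^{q,∞}-concave: ‖(‖f_k‖_{L^p})_k‖_{ℓ^{q,∞}} ≤ C ‖ ‖(f_k(·))_k‖_{ℓ^{q,∞}} ‖_{L^p}.) -/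
open MeasureTheory
open scoped ENNReal

/-!
Let `A = {k : ‖f_k‖_p > t}` and `m = #A`, so that `m t^p ≤ ∫ ∑_{k ∈ A} |f_k|^p`. At each point `x`,
the `j`-th largest of the numbers `|f_k(x)|`, `k ∈ A`, is at most `W(x) j^{-1/q}`, where
`W(x) = ‖(f_k(x))_k‖_{ℓ^{q,∞}}`; hence
`∑_{k ∈ A} |f_k(x)|^p ≤ W(x)^p ∑_{j ≤ m} j^{-p/q} ≤ W(x)^p m^{1-p/q} / (1 - p/q)`.
Integrating, `m t^p ≤ m^{1-p/q} ‖W‖_p^p / (1 - p/q)`, i.e. `t m^{1/q} ≤ (q/(q-p))^{1/p} ‖W‖_p`.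
-/

open Finset

lemma one_sub_div_pos {p q : ℝ} (hq : 0 < q) (hpq : p < q) : 0 < 1 - p / q :=
  sub_pos.2 ((div_lt_one hq).2 hpq)

lemma mul_rpow_sub_one_le_rpow_sub_rpow {s x : ℝ} (hs0 : 0 ≤ s) (hs1 : s ≤ 1) (hx : 1 ≤ x) :
    s * x ^ (s - 1) ≤ x ^ s - (x - 1) ^ s := by
  have hx0 : 0 < x := one_pos.trans_le hx
  have bernoulli : (1 + -x⁻¹) ^ s ≤ 1 + s * -x⁻¹ :=
    rpow_one_add_le_one_add_mul_self (by simpa using inv_le_one_of_one_le₀ hx) hs0 hs1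
  have hfactor : x - 1 = x * (1 + -x⁻¹) := by field_simp; ring
  rw [hfactor, Real.mul_rpow hx0.le (by simpa using inv_le_one_of_one_le₀ hx),
    Real.rpow_sub_one hx0.ne']
  have := mul_le_mul_of_nonneg_left bernoulli (Real.rpow_nonneg hx0.le s)
  linarith [show x ^ s * (1 + s * -x⁻¹) = x ^ s - s * (x ^ s / x) by ring]

lemma mul_sum_range_rpow_sub_one_le {s : ℝ} (hs0 : 0 < s) (hs1 : s ≤ 1) (m : ℕ) :
    s * ∑ i ∈ range m, ((i : ℝ) + 1) ^ (s - 1) ≤ (m : ℝ) ^ s := by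
  calc s * ∑ i ∈ range m, ((i : ℝ) + 1) ^ (s - 1)
      ≤ ∑ i ∈ range m, (((i + 1 : ℕ) : ℝ) ^ s - ((i : ℕ) : ℝ) ^ s) := by
        rw [mul_sum]
        refine sum_le_sum fun i _ => ?_
        simpa using mul_rpow_sub_one_le_rpow_sub_rpow hs0.le hs1 (x := (i : ℝ) + 1) (by simp)
    _ = (m : ℝ) ^ s := by
        rw [sum_range_sub (fun i : ℕ => (i : ℝ) ^ s), Nat.cast_zero, Real.zero_rpow hs0.ne',
          sub_zero]

section WeakLq

variable {q : ℝ} {n : ℕ} (a : Fin n → ℝ)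

lemma weakLq_eq_iSup_card :
    weakLq q a = ⨆ t : Set.Ioi (0 : ℝ), t.1 * (#{k | t.1 < |a k|} : ℝ) ^ (1 / q) := by
  simp only [weakLq, Nat.card_eq_fintype_card, Fintype.card_subtype]

lemma weakLq_bddAbove (hq : 0 < q) :
    BddAbove (Set.range fun t : Set.Ioi (0 : ℝ) => t.1 * (#{k | t.1 < |a k|} : ℝ) ^ (1 / q)) := by
  refine ⟨(∑ k, |a k|) * (n : ℝ) ^ (1 / q), ?_⟩
  rintro _ ⟨⟨t, ht⟩, rfl⟩
  obtain h0 | ⟨k, hk⟩ := (filter (fun k => t < |a k|) univ).eq_empty_or_nonempty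
  · simp only [h0, card_empty, CharP.cast_eq_zero, Real.zero_rpow (one_div_pos.2 hq).ne', mul_zero]
    positivity
  have hcard : (#{k | t < |a k|} : ℝ) ≤ n := by
    exact_mod_cast (card_filter_le _ _).trans (card_univ.trans (Fintype.card_fin n)).le
  dsimp only
  gcongr
  exact (mem_filter.1 hk).2.le.trans (single_le_sum (fun k _ => abs_nonneg (a k)) (mem_univ k))

lemma le_weakLq (hq : 0 < q) {t : ℝ} (ht : 0 < t) :
    t * (#{k | t < |a k|} : ℝ) ^ (1 / q) ≤ weakLq q a := by
  rw [weakLq_eq_iSup_card]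
  exact le_ciSup (weakLq_bddAbove a hq) ⟨t, ht⟩

lemma weakLq_nonneg (hq : 0 < q) : 0 ≤ weakLq q a :=
  le_trans (by positivity) (le_weakLq a hq one_pos)

lemma mul_card_rpow_le_weakLq (hq : 0 < q) (S : Finset (Fin n)) {v : ℝ}
    (hv : ∀ k ∈ S, v ≤ |a k|) : v * (#S : ℝ) ^ (1 / q) ≤ weakLq q a := by
  refine le_of_forall_lt_imp_le_of_dense fun u hu => ?_
  rcases le_or_gt u 0 with hu0 | hu0
  · exact hu0.trans (weakLq_nonneg a hq)
  set c := (#S : ℝ) ^ (1 / q)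
  have hc : 0 < c := by
    refine lt_of_le_of_ne (by positivity) fun h => ?_
    rw [← h, mul_zero] at hu
    exact hu0.not_gt hu
  have hS : S ⊆ ({k | u / c < |a k|} : Finset (Fin n)) := fun k hk =>
    mem_filter.2 ⟨mem_univ k, ((div_lt_iff₀ hc).2 hu).trans_le (hv k hk)⟩
  calc u = u / c * c := (div_mul_cancel₀ _ hc.ne').symm
    _ ≤ u / c * (#{k | u / c < |a k|} : ℝ) ^ (1 / q) := by
        gcongr
        exact Real.rpow_le_rpow (by positivity) (by exact_mod_cast card_le_card hS) (by positivity)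
    _ ≤ weakLq q a := le_weakLq a hq (div_pos hu0 hc)

lemma ofReal_weakLq_le (hq : 0 < q) {B : ℝ≥0∞}
    (h : ∀ t > 0, ENNReal.ofReal t * (#{k | t < |a k|} : ℝ≥0∞) ^ (1 / q) ≤ B) :
    ENNReal.ofReal (weakLq q a) ≤ B := by
  rcases eq_top_or_lt_top B with rfl | hB
  · exact le_top
  rw [ENNReal.ofReal_le_iff_le_toReal hB.ne, weakLq_eq_iSup_card]
  refine Real.iSup_le (fun ⟨t, ht⟩ => ?_) ENNReal.toReal_nonneg
  rw [← ENNReal.ofReal_le_iff_le_toReal hB.ne, ENNReal.ofReal_mul ht.le,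
    ← ENNReal.ofReal_rpow_of_nonneg (Nat.cast_nonneg _) (by positivity), ENNReal.ofReal_natCast]
  exact h t ht

lemma sum_abs_rpow_le_weakLq_rpow_mul {p : ℝ} (hp : 0 ≤ p) (hq : 0 < q) (S : Finset (Fin n)) :
    ∑ k ∈ S, |a k| ^ p ≤ weakLq q a ^ p * ∑ i ∈ range #S, ((i : ℝ) + 1) ^ (-(p / q)) := by
  induction S using Finset.induction_on_min_value (fun k => |a k|) with
  | empty => simp
  | insert b S hb hmin ih =>
    have hW := weakLq_nonneg a hq
    have hj : (0 : ℝ) < #S + 1 := by positivity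
    have hbW : |a b| * ((#S : ℝ) + 1) ^ (1 / q) ≤ weakLq q a := by
      have := mul_card_rpow_le_weakLq a hq (insert b S) (v := |a b|) fun k hk => by
        rcases mem_insert.1 hk with rfl | hk
        exacts [le_rfl, hmin k hk]
      rwa [card_insert_of_notMem hb, Nat.cast_add_one] at this
    have hb_le : |a b| ^ p ≤ weakLq q a ^ p * ((#S : ℝ) + 1) ^ (-(p / q)) := by
      rw [Real.rpow_neg hj.le, ← div_eq_mul_inv, le_div_iff₀ (by positivity),
        show p / q = 1 / q * p by ring, Real.rpow_mul hj.le,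
        ← Real.mul_rpow (abs_nonneg _) (by positivity)]
      exact Real.rpow_le_rpow (by positivity) hbW hp
    rw [sum_insert hb, card_insert_of_notMem hb, sum_range_succ, mul_add, add_comm]
    exact add_le_add ih hb_le

lemma one_sub_div_mul_sum_abs_rpow_le {p : ℝ} (hp : 0 ≤ p) (hpq : p < q) (S : Finset (Fin n)) :
    (1 - p / q) * ∑ k ∈ S, |a k| ^ p ≤ (#S : ℝ) ^ (1 - p / q) * weakLq q a ^ p := by
  have hq : 0 < q := hp.trans_lt hpq
  have hs : 0 < 1 - p / q := one_sub_div_pos hq hpq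
  calc (1 - p / q) * ∑ k ∈ S, |a k| ^ p
      ≤ (1 - p / q) * (weakLq q a ^ p * ∑ i ∈ range #S, ((i : ℝ) + 1) ^ (-(p / q))) := by
        gcongr
        exact sum_abs_rpow_le_weakLq_rpow_mul a hp hq S
    _ = weakLq q a ^ p * ((1 - p / q) * ∑ i ∈ range #S, ((i : ℝ) + 1) ^ (1 - p / q - 1)) := by
        ring_nf
    _ ≤ weakLq q a ^ p * (#S : ℝ) ^ (1 - p / q) := by
        gcongr
        · exact Real.rpow_nonneg (weakLq_nonneg a hq) p
        · exact mul_sum_range_rpow_sub_one_le hs (by linarith [div_nonneg hp hq.le]) #S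
    _ = (#S : ℝ) ^ (1 - p / q) * weakLq q a ^ p := mul_comm _ _

lemma ofReal_one_sub_div_mul_sum_enorm_rpow_le {p : ℝ} (hp : 0 ≤ p) (hpq : p < q)
    (S : Finset (Fin n)) :
    ENNReal.ofReal (1 - p / q) * ∑ k ∈ S, ‖a k‖ₑ ^ p ≤
      (#S : ℝ≥0∞) ^ (1 - p / q) * ENNReal.ofReal (weakLq q a) ^ p := by
  have hq : 0 < q := hp.trans_lt hpq
  have hs : 0 ≤ 1 - p / q := (one_sub_div_pos hq hpq).le
  simp_rw [Real.enorm_eq_ofReal_abs, ENNReal.ofReal_rpow_of_nonneg (abs_nonneg _) hp]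
  have := ENNReal.ofReal_le_ofReal (one_sub_div_mul_sum_abs_rpow_le a hp hpq S)
  rwa [ENNReal.ofReal_mul hs, ENNReal.ofReal_sum_of_nonneg (fun k _ => by positivity),
    ENNReal.ofReal_mul (by positivity), ← ENNReal.ofReal_rpow_of_nonneg (weakLq_nonneg a hq) hp,
    ← ENNReal.ofReal_rpow_of_nonneg (Nat.cast_nonneg _) hs, ENNReal.ofReal_natCast] at this

end WeakLq

lemma mul_natCast_rpow_le_of_one_sub_div_mul_le {p q : ℝ} (hp : 0 < p) (hpq : p < q) {m : ℕ}
    {x I : ℝ≥0∞}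
    (h : ENNReal.ofReal (1 - p / q) * (m * x ^ p) ≤ (m : ℝ≥0∞) ^ (1 - p / q) * I) :
    x * (m : ℝ≥0∞) ^ (1 / q) ≤ ENNReal.ofReal ((1 - p / q)⁻¹ ^ (1 / p)) * I ^ (1 / p) := by
  have hq : 0 < q := hp.trans hpq
  rcases m.eq_zero_or_pos with rfl | hm
  · rw [Nat.cast_zero, ENNReal.zero_rpow_of_pos (one_div_pos.2 hq), mul_zero]
    exact zero_le
  set s := 1 - p / q
  have hs : 0 < s := one_sub_div_pos hq hpq
  have hm0 : (m : ℝ≥0∞) ≠ 0 := by exact_mod_cast hm.ne'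
  have hmt : (m : ℝ≥0∞) ≠ ⊤ := ENNReal.natCast_ne_top m
  have hsplit : (m : ℝ≥0∞) = (m : ℝ≥0∞) ^ s * (m : ℝ≥0∞) ^ (p / q) := by
    rw [← ENNReal.rpow_add _ _ hm0 hmt, sub_add_cancel, ENNReal.rpow_one]
  have hpow : ENNReal.ofReal s * (x * (m : ℝ≥0∞) ^ (1 / q)) ^ p ≤ I := by
    rw [← ENNReal.mul_le_mul_iff_right (ENNReal.rpow_pos (by positivity) hmt).ne'
      (ENNReal.rpow_ne_top_of_nonneg hs.le hmt)]
    nth_rewrite 1 [hsplit] at h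
    calc (m : ℝ≥0∞) ^ s * (ENNReal.ofReal s * (x * (m : ℝ≥0∞) ^ (1 / q)) ^ p)
        = ENNReal.ofReal s * ((m : ℝ≥0∞) ^ s * (m : ℝ≥0∞) ^ (p / q) * x ^ p) := by
          rw [ENNReal.mul_rpow_of_nonneg _ _ hp.le, ← ENNReal.rpow_mul,
            show 1 / q * p = p / q by ring]
          ring
      _ ≤ _ := h
  calc x * (m : ℝ≥0∞) ^ (1 / q) ≤ ((ENNReal.ofReal s)⁻¹ * I) ^ (1 / p) := by
        rw [one_div p, ENNReal.le_rpow_inv_iff hp, ← ENNReal.div_eq_inv_mul,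
          ENNReal.le_div_iff_mul_le (Or.inl (by simpa using hs)) (Or.inl ENNReal.ofReal_ne_top),
          mul_comm]
        exact hpow
    _ = ENNReal.ofReal (s⁻¹ ^ (1 / p)) * I ^ (1 / p) := by
        rw [ENNReal.mul_rpow_of_nonneg _ _ (by positivity), ← ENNReal.ofReal_inv_of_pos hs,
          ENNReal.ofReal_rpow_of_nonneg (by positivity) (by positivity)]

section Lp

variable {α : Type*} [MeasurableSpace α] (μ : Measure α) {p q : ℝ} {n : ℕ}

lemma ofReal_rpow_le_lintegral_of_lt_eLpNorm (hp : 0 < p) {f : α → ℝ} {t : ℝ}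
    (ht : t < (eLpNorm f (ENNReal.ofReal p) μ).toReal) :
    ENNReal.ofReal t ^ p ≤ ∫⁻ x, ‖f x‖ₑ ^ p ∂μ := by
  calc ENNReal.ofReal t ^ p ≤ eLpNorm f (ENNReal.ofReal p) μ ^ p :=
        ENNReal.rpow_le_rpow (ENNReal.ofReal_le_of_le_toReal ht.le) hp.le
    _ = ∫⁻ x, ‖f x‖ₑ ^ p ∂μ := by
        have := eLpNorm_nnreal_pow_eq_lintegral (f := f) (μ := μ) (p := p.toNNReal)
          (by simpa using hp)
        rw [Real.coe_toNNReal p hp.le] at this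
        exact this

lemma card_mul_rpow_le_lintegral_weakLq (hp : 0 < p) (hpq : p < q) (f : Fin n → α → ℝ)
    (hf : ∀ k, AEMeasurable (f k) μ) (t : ℝ) :
    ENNReal.ofReal (1 - p / q) *
        (#{k | t < (eLpNorm (f k) (ENNReal.ofReal p) μ).toReal} * ENNReal.ofReal t ^ p) ≤
      (#{k | t < (eLpNorm (f k) (ENNReal.ofReal p) μ).toReal} : ℝ≥0∞) ^ (1 - p / q) *
        ∫⁻ x, ENNReal.ofReal (weakLq q fun k => f k x) ^ p ∂μ := by
  set A : Finset (Fin n) := {k | t < (eLpNorm (f k) (ENNReal.ofReal p) μ).toReal}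
  calc ENNReal.ofReal (1 - p / q) * (#A * ENNReal.ofReal t ^ p)
      ≤ ENNReal.ofReal (1 - p / q) * ∑ k ∈ A, ∫⁻ x, ‖f k x‖ₑ ^ p ∂μ := by
        rw [← nsmul_eq_mul, ← sum_const]
        gcongr with k hk
        exact ofReal_rpow_le_lintegral_of_lt_eLpNorm μ hp (mem_filter.1 hk).2
    _ = ∫⁻ x, ENNReal.ofReal (1 - p / q) * ∑ k ∈ A, ‖f k x‖ₑ ^ p ∂μ := by
        rw [lintegral_const_mul', lintegral_finsetSum']
        · exact fun k _ => (hf k).enorm.pow_const p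
        · exact ENNReal.ofReal_ne_top
    _ ≤ ∫⁻ x, (#A : ℝ≥0∞) ^ (1 - p / q) * ENNReal.ofReal (weakLq q fun k => f k x) ^ p ∂μ :=
        lintegral_mono fun x =>
          ofReal_one_sub_div_mul_sum_enorm_rpow_le (fun k => f k x) hp.le hpq A
    _ = _ := lintegral_const_mul' _ _
          (ENNReal.rpow_ne_top_of_nonneg (one_sub_div_pos (hp.trans hpq) hpq).le
            (ENNReal.natCast_ne_top _))

theorem ofReal_weakLq_eLpNorm_le (hp : 0 < p) (hpq : p < q) (f : Fin n → α → ℝ)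
    (hf : ∀ k, AEMeasurable (f k) μ) :
    ENNReal.ofReal (weakLq q fun k => (eLpNorm (f k) (ENNReal.ofReal p) μ).toReal) ≤
      ENNReal.ofReal ((1 - p / q)⁻¹ ^ (1 / p)) *
        (∫⁻ x, ENNReal.ofReal (weakLq q fun k => f k x) ^ p ∂μ) ^ (1 / p) := by
  refine ofReal_weakLq_le _ (hp.trans hpq) fun t _ => ?_
  simp only [abs_of_nonneg ENNReal.toReal_nonneg]
  exact mul_natCast_rpow_le_of_one_sub_div_mul_le hp hpq
    (card_mul_rpow_le_lintegral_weakLq μ hp hpq f hf t)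

end Lp

/-- Theorem: for `1 ≤ p < q < ∞`, the space `L^p[0,1]` is `ℓ^{q,∞}`-concave. -/
theorem Lp_weak_lq_concave (p q : ℝ) (hp : 1 ≤ p) (hpq : p < q) :
    ∃ C : ℝ, 0 < C ∧ ∀ (n : ℕ) (f : Fin n → ℝ → ℝ),
      (∀ k, MemLp (f k) (ENNReal.ofReal p) mu01) →
      ENNReal.ofReal (weakLq q fun k => (eLpNorm (f k) (ENNReal.ofReal p) mu01).toReal) ≤
        ENNReal.ofReal C *
          (∫⁻ x, ENNReal.ofReal (weakLq q fun k => f k x) ^ p ∂mu01) ^ (1 / p) := by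
  have hp0 : 0 < p := one_pos.trans_le hp
  have hs : 0 < 1 - p / q := one_sub_div_pos (hp0.trans hpq) hpq
  exact ⟨(1 - p / q)⁻¹ ^ (1 / p), by positivity, fun n f hf =>
    ofReal_weakLq_eLpNorm_le mu01 hp0 hpq f fun k => (hf k).aemeasurable⟩
end

section
/- Let 0 < d < 1/2, let i ∈ ℕ, and let y_1, …, y_i ∈ L^1[0,1]. Then there exists a selection of signs η'_1, …, η'_i ∈ {-1, 1} such that d · 2^{-i} · Σ_{l=1}^i ‖y_l‖_{L^1} ≤ K(2^{-i}, Σ_{l=1}^i η'_l y_l; L^1, L^∞). -/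
open MeasureTheory
open scoped ENNReal

/-! Take the signs `σ₀` maximising `K(τ, ∑ σ_l y_l)`. Split `[0,1]` into the `2^i` sets `Ω_σ`
on which `(y_l x)_l` has sign pattern `σ`; there `∑ |y_l| = |∑ σ_l y_l|`. For any splitting
`f = g + h`, `∫_Ω |f| ≤ ‖g‖₁ + |Ω| ‖h‖_∞`, so `τ ∫_Ω |f| ≤ (τ + |Ω|) K(τ, f)`. Summing over the
pieces gives `τ ∑ ‖y_l‖₁ ≤ (2^i τ + 1) K(τ, ∑ σ₀_l y_l)`, which is `2 K` when `τ = 2^{-i}`. -/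

section SignPatterns

variable {α ι : Type*} [Fintype ι]

noncomputable def signOfBool (b : Bool) : ℝ := if b then 1 else -1

noncomputable def signedSum (σ : ι → Bool) (y : ι → α → ℝ) (x : α) : ℝ :=
  ∑ l, signOfBool (σ l) * y l x

noncomputable def signPattern (y : ι → α → ℝ) (x : α) : ι → Bool := fun l => decide (0 ≤ y l x)

lemma signOfBool_eq_one_or_eq_neg_one (b : Bool) : signOfBool b = 1 ∨ signOfBool b = -1 := by
  cases b <;> simp [signOfBool]

lemma signedSum_signPattern (y : ι → α → ℝ) (x : α) :
    signedSum (signPattern y x) y x = ∑ l, |y l x| := by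
  refine Finset.sum_congr rfl fun l _ => ?_
  by_cases h : 0 ≤ y l x
  · simp [signPattern, signOfBool, h, abs_of_nonneg h]
  · simp [signPattern, signOfBool, h, abs_of_neg (not_le.1 h)]

variable [MeasurableSpace α] {μ : Measure α}

lemma aemeasurable_signPattern {y : ι → α → ℝ} (hy : ∀ l, AEMeasurable (y l) μ) :
    AEMeasurable (signPattern y) μ := by
  have hdecide : Measurable fun r : ℝ => decide (0 ≤ r) := by
    refine measurable_to_bool ?_
    simp only [Set.preimage, Set.mem_singleton_iff, decide_eq_true_eq]
    exact measurableSet_Ici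
  exact aemeasurable_pi_lambda _ fun l => hdecide.comp_aemeasurable (hy l)

lemma lintegral_eq_sum_setLIntegral_fiber {β : Type*} [Fintype β] [MeasurableSpace β]
    [MeasurableSingletonClass β] {φ : α → β} (hφ : AEMeasurable φ μ) (F : α → ℝ≥0∞) :
    ∫⁻ x, F x ∂μ = ∑ b, ∫⁻ x in φ ⁻¹' {b}, F x ∂μ := by
  have hdisj : Pairwise fun a b => AEDisjoint μ (φ ⁻¹' {a}) (φ ⁻¹' {b}) := fun a b hab =>
    ((Set.disjoint_singleton.2 hab).preimage φ).aedisjoint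
  have h := lintegral_iUnion₀
    (fun b => hφ.nullMeasurableSet_preimage (measurableSet_singleton b)) hdisj F
  rwa [tsum_fintype, ← Set.preimage_iUnion, Set.iUnion_of_singleton, Set.preimage_univ,
    Measure.restrict_univ] at h

lemma sum_lintegral_enorm_eq_sum_setLIntegral_signedSum [DecidableEq ι] {y : ι → α → ℝ}
    (hy : ∀ l, AEMeasurable (y l) μ) :
    ∑ l, ∫⁻ x, ‖y l x‖ₑ ∂μ =
      ∑ σ, ∫⁻ x in signPattern y ⁻¹' {σ}, ‖signedSum σ y x‖ₑ ∂μ := by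
  have hpattern := aemeasurable_signPattern hy
  rw [← lintegral_finsetSum' _ fun l _ => (hy l).enorm,
    lintegral_eq_sum_setLIntegral_fiber hpattern]
  refine Finset.sum_congr rfl fun σ _ => lintegral_congr_ae ?_
  filter_upwards [ae_restrict_mem₀ (hpattern.nullMeasurableSet_preimage
    (measurableSet_singleton σ))] with x hx
  rw [← show signPattern y x = σ from hx, signedSum_signPattern,
    Real.enorm_of_nonneg (Finset.sum_nonneg fun l _ => abs_nonneg _),
    ENNReal.ofReal_sum_of_nonneg fun l _ => abs_nonneg _]
  simp_rw [Real.enorm_eq_ofReal_abs]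

end SignPatterns

lemma setLIntegral_enorm_add_le {α E : Type*} [MeasurableSpace α] [NormedAddCommGroup E]
    (μ : Measure α) (g h : α → E) (s : Set α) :
    ∫⁻ x in s, ‖g x + h x‖ₑ ∂μ ≤ eLpNorm g 1 μ + μ s * eLpNorm h ⊤ μ := by
  calc ∫⁻ x in s, ‖g x + h x‖ₑ ∂μ ≤ ∫⁻ x in s, (‖g x‖ₑ + eLpNorm h ⊤ μ) ∂μ := by
        refine lintegral_mono_ae (ae_restrict_of_ae ?_)
        filter_upwards [ae_le_eLpNormEssSup (f := h) (μ := μ)] with x hx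
        rw [eLpNorm_exponent_top]
        exact (enorm_add_le _ _).trans (by gcongr)
    _ = ∫⁻ x in s, ‖g x‖ₑ ∂μ + μ s * eLpNorm h ⊤ μ := by
        rw [lintegral_add_right _ measurable_const, setLIntegral_const, mul_comm]
    _ ≤ eLpNorm g 1 μ + μ s * eLpNorm h ⊤ μ := by
        rw [eLpNorm_one_eq_lintegral_enorm]
        gcongr
        exact Measure.restrict_le_self

lemma ofReal_mul_setLIntegral_le_Kfun {τ : ℝ} (hτ : 0 < τ) (f : ℝ → ℝ) (s : Set ℝ) :
    ENNReal.ofReal τ * ∫⁻ x in s, ‖f x‖ₑ ∂mu01 ≤ (ENNReal.ofReal τ + mu01 s) * Kfun τ f := by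
  have hs : mu01 s ≠ ∞ := by
    refine ne_top_of_le_ne_top ?_ (measure_mono (Set.subset_univ s))
    simp [mu01]
  have hc₀ : ENNReal.ofReal τ + mu01 s ≠ 0 := by simp [hτ]
  have hc : ENNReal.ofReal τ + mu01 s ≠ ∞ := by finiteness
  simp only [Kfun, ENNReal.mul_iInf_of_ne hc₀ hc]
  refine le_iInf fun g => le_iInf fun h => le_iInf fun hfgh => ?_
  subst hfgh
  calc ENNReal.ofReal τ * ∫⁻ x in s, ‖g x + h x‖ₑ ∂mu01
      ≤ ENNReal.ofReal τ * (eLpNorm g 1 mu01 + mu01 s * eLpNorm h ⊤ mu01) := by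
        gcongr; exact setLIntegral_enorm_add_le mu01 g h s
    _ = ENNReal.ofReal τ * eLpNorm g 1 mu01 +
          mu01 s * (ENNReal.ofReal τ * eLpNorm h ⊤ mu01) := by ring
    _ ≤ (ENNReal.ofReal τ + mu01 s) * eLpNorm g 1 mu01 +
          (ENNReal.ofReal τ + mu01 s) * (ENNReal.ofReal τ * eLpNorm h ⊤ mu01) := by
        gcongr
        · exact le_self_add
        · exact le_add_self
    _ = _ := by rw [mul_add]

theorem exists_signs_ofReal_mul_sum_eLpNorm_le_Kfun {ι : Type*} [Fintype ι] [DecidableEq ι]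
    (y : ι → ℝ → ℝ) (hy : ∀ l, AEMeasurable (y l) mu01) {τ : ℝ} (hτ : 0 < τ) :
    ∃ σ : ι → Bool, ENNReal.ofReal τ * ∑ l, eLpNorm (y l) 1 mu01 ≤
      (2 ^ Fintype.card ι * ENNReal.ofReal τ + 1) * Kfun τ (signedSum σ y) := by
  obtain ⟨σ₀, hσ₀⟩ := Finite.exists_max fun σ : ι → Bool => Kfun τ (signedSum σ y)
  have hfibers : ∑ σ, mu01 (signPattern y ⁻¹' {σ}) = 1 := by
    simpa [mu01] using (lintegral_eq_sum_setLIntegral_fiber (aemeasurable_signPattern hy) 1).symm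
  refine ⟨σ₀, ?_⟩
  calc ENNReal.ofReal τ * ∑ l, eLpNorm (y l) 1 mu01
      = ∑ σ, ENNReal.ofReal τ * ∫⁻ x in signPattern y ⁻¹' {σ}, ‖signedSum σ y x‖ₑ ∂mu01 := by
        simp_rw [eLpNorm_one_eq_lintegral_enorm]
        rw [sum_lintegral_enorm_eq_sum_setLIntegral_signedSum hy, Finset.mul_sum]
    _ ≤ ∑ σ, (ENNReal.ofReal τ + mu01 (signPattern y ⁻¹' {σ})) * Kfun τ (signedSum σ₀ y) := by
        refine Finset.sum_le_sum fun σ _ => (ofReal_mul_setLIntegral_le_Kfun hτ _ _).trans ?_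
        gcongr
        exact hσ₀ σ
    _ = (2 ^ Fintype.card ι * ENNReal.ofReal τ + 1) * Kfun τ (signedSum σ₀ y) := by
        rw [← Finset.sum_mul, Finset.sum_add_distrib, hfibers]
        simp

theorem exists_signs_K_lower_bound_general (d : ℝ) (hd2 : d < 1 / 2) (i : ℕ)
    (y : Fin i → ℝ → ℝ) (hy : ∀ l, Integrable (y l) mu01) :
    ∃ η : Fin i → ℝ, (∀ l, η l = 1 ∨ η l = -1) ∧
      ENNReal.ofReal (d * ((2 : ℝ) ^ i)⁻¹ * ∑ l, (eLpNorm (y l) 1 mu01).toReal) ≤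
        Kfun ((2 : ℝ) ^ i)⁻¹ (fun t => ∑ l, η l * y l t) := by
  set τ : ℝ := ((2 : ℝ) ^ i)⁻¹
  obtain ⟨σ, hσ⟩ := exists_signs_ofReal_mul_sum_eLpNorm_le_Kfun y
    (fun l => (hy l).aemeasurable) (τ := τ) (by positivity)
  have hcoef : 2 ^ Fintype.card (Fin i) * ENNReal.ofReal τ + 1 = 2 := by
    rw [ENNReal.ofReal_inv_of_pos (by positivity), ENNReal.ofReal_pow zero_le_two]
    simp [ENNReal.mul_inv_cancel, one_add_one_eq_two]
  rw [hcoef] at hσ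
  refine ⟨fun l => signOfBool (σ l), fun l => signOfBool_eq_one_or_eq_neg_one _, ?_⟩
  set N := ∑ l, (eLpNorm (y l) 1 mu01).toReal
  have hN : ENNReal.ofReal N ≤ ∑ l, eLpNorm (y l) 1 mu01 := by
    rw [ENNReal.ofReal_sum_of_nonneg fun l _ => ENNReal.toReal_nonneg]
    exact Finset.sum_le_sum fun l _ => ENNReal.ofReal_toReal_le
  calc ENNReal.ofReal (d * τ * N) ≤ ENNReal.ofReal (2⁻¹ * τ * N) := by
        gcongr; linarith
    _ = 2⁻¹ * (ENNReal.ofReal τ * ENNReal.ofReal N) := by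
        rw [ENNReal.ofReal_mul (by positivity), ENNReal.ofReal_mul (by positivity), mul_assoc]
        simp
    _ ≤ 2⁻¹ * (ENNReal.ofReal τ * ∑ l, eLpNorm (y l) 1 mu01) := by gcongr
    _ ≤ 2⁻¹ * (2 * Kfun τ (signedSum σ y)) := by gcongr
    _ = Kfun τ (signedSum σ y) := ENNReal.inv_mul_cancel_left two_ne_zero ENNReal.ofNat_ne_top

/-- Lemma: for `0 < d < 1/2`, `i ∈ ℕ` and `y_1, …, y_i ∈ L^1[0,1]` there are
signs `η'_l = ±1` with `d 2^{-i} ∑ ‖y_l‖_1 ≤ K(2^{-i}, ∑ η'_l y_l; L^1, L^∞)`. -/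
theorem exists_signs_K_lower_bound (d : ℝ) (hd : 0 < d) (hd2 : d < 1 / 2) (i : ℕ)
    (y : Fin i → ℝ → ℝ) (hy : ∀ l, Integrable (y l) mu01) :
    ∃ η : Fin i → ℝ, (∀ l, η l = 1 ∨ η l = -1) ∧
      ENNReal.ofReal (d * ((2 : ℝ) ^ i)⁻¹ * ∑ l, (eLpNorm (y l) 1 mu01).toReal) ≤
        Kfun ((2 : ℝ) ^ i)⁻¹ (fun t => ∑ l, η l * y l t) :=
  exists_signs_K_lower_bound_general d hd2 i y hy
end
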